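/- Let h(R) = 2/3 − (2/3)·R⁴/(16·36) − R²/16. Then h(π/2) > 0; in fact h is decreasing on [0, ∞) and h(2) = 43/108 > 0, hence h(R) > 0 for all 0 ≤ R ≤ 2. Consequently, for 0 < R ≤ π/2, (Λ_{3,0}(R) − Λ_{3,2}(R))·(2/3) > Λ_{3,1}(R). -/

import Mathlib

/-- The Bessel function of order `ν > -1/2`, via the Poisson integral representation. -/
noncomputable def besselJ (ν : ℝ) (t : ℝ) : ℝ :=
  (2 * (t / 2) ^ ν / (Real.Gamma (ν + 1 / 2) * Real.Gamma (1 / 2))) *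
    ∫ s in (0 : ℝ)..1, Real.cos (t * s) * (1 - s ^ 2) ^ (ν - 1 / 2)

/-- `Λ_{3,k}(R) = (2π)^{3/2} · 4π · ∫_0^R r [J_{(2k+1)/2}(r)]² dr`. -/
noncomputable def Lambda3 (k : ℕ) (R : ℝ) : ℝ :=
  (2 * Real.pi) ^ ((3 : ℝ) / 2) * (4 * Real.pi) *
    ∫ r in (0 : ℝ)..R, r * (besselJ ((2 * (k : ℝ) + 1) / 2) r) ^ 2

/-!
For half-integer order the Poisson weight of `besselJ` is a polynomial, so
`r J_{k+1/2}(r)² = 2 / (π 4^k k!²) · r^(2k+2) · P_k(r)²` with `P_k(r) = ∫₀¹ cos (r s) (1 - s²)^k ds`.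
Integrating `1 - x²/2 ≤ cos x ≤ 1 - x²/2 + x⁴/24` and `cos x ≤ 1` against `(1 - s²)^k` gives
`P_0 ≥ 1 - r²/6`, `P_1 ≤ 2/3 - r²/15 + r⁴/420` and `P_2 ≤ 8/15`, while `P_k ≥ 0` for `r ≤ π/2`.
This reduces `r J_{3/2}² + (2/3) r J_{5/2}² < (2/3) r J_{1/2}²` on `(0, π/2]` to a polynomial
inequality in `r²`, and integrating it gives the inequality between the `Λ_{3,k}`.
The claims about `h` are elementary: `h` is decreasing in `R²` and `h 2 = 43/108`.
-/

open Real Set intervalIntegral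
open scoped Nat

/-- The integral in `besselJ (n + 1/2)`, whose weight `(1 - s²)^(ν - 1/2)` is then a polynomial. -/
noncomputable def besselPoissonIntegral (n : ℕ) (t : ℝ) : ℝ :=
  ∫ s in (0 : ℝ)..1, cos (t * s) * (1 - s ^ 2) ^ n

@[fun_prop]
theorem continuous_besselPoissonIntegral (n : ℕ) : Continuous (besselPoissonIntegral n) :=
  continuous_parametric_intervalIntegral_of_continuous' (by fun_prop) 0 1

theorem besselPoissonIntegral_le {q : ℝ → ℝ} (hq : Continuous q) (hcos : ∀ x, cos x ≤ q x)
    (n : ℕ) (t : ℝ) :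
    besselPoissonIntegral n t ≤ ∫ s in (0 : ℝ)..1, q (t * s) * (1 - s ^ 2) ^ n := by
  refine integral_mono_on zero_le_one (Continuous.intervalIntegrable (by fun_prop) _ _)
    (Continuous.intervalIntegrable (by fun_prop) _ _) fun s hs => ?_
  have : 0 ≤ 1 - s ^ 2 := by nlinarith [hs.1, hs.2]
  exact mul_le_mul_of_nonneg_right (hcos _) (pow_nonneg this n)

theorem le_besselPoissonIntegral {q : ℝ → ℝ} (hq : Continuous q) (hcos : ∀ x, q x ≤ cos x)
    (n : ℕ) (t : ℝ) :
    ∫ s in (0 : ℝ)..1, q (t * s) * (1 - s ^ 2) ^ n ≤ besselPoissonIntegral n t := by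
  refine integral_mono_on zero_le_one (Continuous.intervalIntegrable (by fun_prop) _ _)
    (Continuous.intervalIntegrable (by fun_prop) _ _) fun s hs => ?_
  have : 0 ≤ 1 - s ^ 2 := by nlinarith [hs.1, hs.2]
  exact mul_le_mul_of_nonneg_right (hcos _) (pow_nonneg this n)

theorem besselPoissonIntegral_nonneg (n : ℕ) {t : ℝ} (ht : |t| ≤ π / 2) :
    0 ≤ besselPoissonIntegral n t := by
  refine integral_nonneg zero_le_one fun s hs => mul_nonneg ?_ (pow_nonneg ?_ n)
  · have hts : |t * s| ≤ π / 2 := by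
      rw [abs_mul, abs_of_nonneg hs.1]
      nlinarith [abs_nonneg t, hs.2]
    exact cos_nonneg_of_neg_pi_div_two_le_of_le (abs_le.1 hts).1 (abs_le.1 hts).2
  · nlinarith [hs.1, hs.2]

theorem cos_le_one_sub_sq_div_two_add_pow_four_div (x : ℝ) :
    cos x ≤ 1 - x ^ 2 / 2 + x ^ 4 / 24 := by
  wlog hx : 0 ≤ x generalizing x
  · have := this (-x) (by linarith)
    rwa [cos_neg, neg_sq, show (-x) ^ 4 = x ^ 4 by ring] at this
  have hF : ∀ y, HasDerivAt (fun x => 1 - x ^ 2 / 2 + x ^ 4 / 24 - cos x)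
      (sin y - (y - y ^ 3 / 6)) y := fun y =>
    ((((hasDerivAt_pow 2 y).div_const 2).const_sub 1).add
      ((hasDerivAt_pow 4 y).div_const 24)).sub (hasDerivAt_cos y) |>.congr_deriv (by
        push_cast; ring)
  have hmono : MonotoneOn (fun x => 1 - x ^ 2 / 2 + x ^ 4 / 24 - cos x) (Ici 0) := by
    refine monotoneOn_of_hasDerivWithinAt_nonneg (convex_Ici 0)
      (fun y _ => (hF y).continuousAt.continuousWithinAt)
      (fun y _ => (hF y).hasDerivWithinAt) fun y hy => ?_
    rw [interior_Ici] at hy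
    exact sub_nonneg.2 (sin_ge_sub_cube (le_of_lt hy))
  have := hmono self_mem_Ici hx hx
  norm_num at this
  linarith

theorem one_sub_sq_div_six_le_besselPoissonIntegral_zero (t : ℝ) :
    1 - t ^ 2 / 6 ≤ besselPoissonIntegral 0 t := by
  convert le_besselPoissonIntegral (q := fun x => 1 - x ^ 2 / 2) (by fun_prop)
    (fun x => one_sub_sq_div_two_le_cos) 0 t using 1
  simp (disch := exact Continuous.intervalIntegrable (by fun_prop) _ _) only [pow_zero, mul_one,
    mul_pow, integral_sub, integral_div, integral_const_mul, integral_pow, integral_const]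
  norm_num; ring

theorem besselPoissonIntegral_one_le (t : ℝ) :
    besselPoissonIntegral 1 t ≤ 2 / 3 - t ^ 2 / 15 + t ^ 4 / 420 := by
  convert besselPoissonIntegral_le (q := fun x => 1 - x ^ 2 / 2 + x ^ 4 / 24) (by fun_prop)
    cos_le_one_sub_sq_div_two_add_pow_four_div 1 t using 1
  have : ∀ s : ℝ, (1 - (t * s) ^ 2 / 2 + (t * s) ^ 4 / 24) * (1 - s ^ 2) ^ 1 =
      1 - (1 + t ^ 2 / 2) * s ^ 2 + (t ^ 2 / 2 + t ^ 4 / 24) * s ^ 4 - t ^ 4 / 24 * s ^ 6 := by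
    intro s; ring
  simp only [this]
  simp (disch := exact Continuous.intervalIntegrable (by fun_prop) _ _) only [integral_add,
    integral_sub, integral_const_mul, integral_pow, integral_const]
  norm_num; ring

theorem besselPoissonIntegral_two_le (t : ℝ) : besselPoissonIntegral 2 t ≤ 8 / 15 := by
  convert besselPoissonIntegral_le (q := fun _ => 1) continuous_const cos_le_one 2 t using 1
  simp (disch := exact Continuous.intervalIntegrable (by fun_prop) _ _) only [one_mul, sub_sq,
    integral_add, integral_sub, integral_const_mul, integral_pow, integral_const, ← pow_mul]
  norm_num

/-- `r J_{k+1/2}(r)²` (see `mul_besselJ_sq`), in a form that is visibly continuous. -/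
noncomputable def besselHalfSq (k : ℕ) (r : ℝ) : ℝ :=
  2 / (π * 4 ^ k * (k ! : ℝ) ^ 2) * r ^ (2 * k + 2) * besselPoissonIntegral k r ^ 2

@[fun_prop]
theorem continuous_besselHalfSq (k : ℕ) : Continuous (besselHalfSq k) := by
  unfold besselHalfSq; fun_prop

theorem mul_besselJ_sq (k : ℕ) {r : ℝ} (hr : 0 ≤ r) :
    r * besselJ (k + 1 / 2) r ^ 2 = besselHalfSq k r := by
  have hpow : ((r / 2) ^ ((k : ℝ) + 1 / 2)) ^ 2 = (r / 2) ^ (2 * k + 1) := by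
    rw [← rpow_mul_natCast (by positivity), ← rpow_natCast]
    push_cast; ring_nf
  have hΓ : Gamma ((k : ℝ) + 1 / 2 + 1 / 2) = k ! := by
    rw [add_assoc, add_halves, Gamma_nat_eq_factorial]
  simp only [besselJ, besselHalfSq, besselPoissonIntegral, add_sub_cancel_right, rpow_natCast,
    hΓ, Gamma_one_half_eq, mul_pow, div_pow, hpow]
  rw [sq_sqrt pi_pos.le, show (4 : ℝ) ^ k = 2 ^ (2 * k) by rw [pow_mul]; norm_num]
  field_simp
  ring

theorem Lambda3_eq (k : ℕ) {R : ℝ} (hR : 0 ≤ R) :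
    Lambda3 k R = (2 * π) ^ ((3 : ℝ) / 2) * (4 * π) * ∫ r in (0 : ℝ)..R, besselHalfSq k r := by
  unfold Lambda3
  congr 1
  refine integral_congr fun r hr => ?_
  rw [uIcc_of_le hR] at hr
  rw [← mul_besselJ_sq k hr.1]
  congr 3
  ring

/-- Here `x = r²`; the three brackets are the bounds on the Poisson integrals for `k = 1, 2, 0`,
and `2.481 > (π / 2)²`. -/
theorem poisson_bounds_polynomial_lt {x : ℝ} (hx0 : 0 ≤ x) (hx : x ≤ 2.481) :
    x * (2 / 3 - x / 15 + x ^ 2 / 420) ^ 2 / 4 + x ^ 2 * (8 / 15) ^ 2 / 96 <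
      2 / 3 * (1 - x / 6) ^ 2 := by
  have hx' := sub_nonneg.2 hx
  nlinarith [mul_nonneg hx0 hx', mul_nonneg (mul_nonneg hx0 hx0) hx', pow_nonneg hx0 3,
    mul_nonneg (pow_nonneg hx0 3) hx']

theorem besselHalfSq_one_add_two_lt {r : ℝ} (hr0 : 0 < r) (hr : r ≤ π / 2) :
    besselHalfSq 1 r + 2 / 3 * besselHalfSq 2 r < 2 / 3 * besselHalfSq 0 r := by
  have hr_abs : |r| ≤ π / 2 := by rwa [abs_of_pos hr0]
  have hr2 : r ^ 2 ≤ 2.481 := by nlinarith [pi_lt_d2]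
  set a := besselPoissonIntegral 0 r
  set b := besselPoissonIntegral 1 r
  set c := besselPoissonIntegral 2 r
  have ha : (1 - r ^ 2 / 6) ^ 2 ≤ a ^ 2 :=
    pow_le_pow_left₀ (by linarith) (one_sub_sq_div_six_le_besselPoissonIntegral_zero r) 2
  have hb : b ^ 2 ≤ (2 / 3 - r ^ 2 / 15 + (r ^ 2) ^ 2 / 420) ^ 2 := by
    refine pow_le_pow_left₀ (besselPoissonIntegral_nonneg 1 hr_abs) ?_ 2
    simpa [← pow_mul] using besselPoissonIntegral_one_le r
  have hc : c ^ 2 ≤ (8 / 15) ^ 2 :=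
    pow_le_pow_left₀ (besselPoissonIntegral_nonneg 2 hr_abs) (besselPoissonIntegral_two_le r) 2
  have key : r ^ 2 * b ^ 2 / 4 + (r ^ 2) ^ 2 * c ^ 2 / 96 < 2 / 3 * a ^ 2 := by
    have := poisson_bounds_polynomial_lt (sq_nonneg r) hr2
    have := mul_le_mul_of_nonneg_left hb (sq_nonneg r)
    have := mul_le_mul_of_nonneg_left hc (sq_nonneg (r ^ 2))
    linarith
  have e_lhs : besselHalfSq 1 r + 2 / 3 * besselHalfSq 2 r =
      2 * r ^ 2 / π * (r ^ 2 * b ^ 2 / 4 + (r ^ 2) ^ 2 * c ^ 2 / 96) := by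
    simp only [besselHalfSq, b, c]; norm_num [Nat.factorial]; field_simp; ring
  have e_rhs : 2 / 3 * besselHalfSq 0 r = 2 * r ^ 2 / π * (2 / 3 * a ^ 2) := by
    simp only [besselHalfSq, a]; norm_num; field_simp
  rw [e_lhs, e_rhs]
  exact mul_lt_mul_of_pos_left key (by positivity)

theorem integral_besselHalfSq_one_add_two_lt {R : ℝ} (hR0 : 0 < R) (hR : R ≤ π / 2) :
    (∫ r in (0 : ℝ)..R, besselHalfSq 1 r) + 2 / 3 * ∫ r in (0 : ℝ)..R, besselHalfSq 2 r <
      2 / 3 * ∫ r in (0 : ℝ)..R, besselHalfSq 0 r := by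
  have hint (k : ℕ) : IntervalIntegrable (besselHalfSq k) MeasureTheory.volume 0 R :=
    (continuous_besselHalfSq k).intervalIntegrable _ _
  have := integral_lt_integral_of_continuousOn_of_le_of_exists_lt hR0
    (f := fun r => besselHalfSq 1 r + 2 / 3 * besselHalfSq 2 r)
    (g := fun r => 2 / 3 * besselHalfSq 0 r) (by fun_prop) (by fun_prop)
    (fun r hr => (besselHalfSq_one_add_two_lt hr.1 (hr.2.trans hR)).le)
    ⟨R, right_mem_Icc.2 hR0.le, besselHalfSq_one_add_two_lt hR0 hR⟩
  rwa [integral_add (hint 1) ((hint 2).const_mul _), integral_const_mul,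
    integral_const_mul] at this

/-- `h(R) = 2/3 − (2/3)R⁴/(16·36) − R²/16` satisfies `h(π/2) > 0`; `h` is (strictly)
decreasing on `[0,∞)`, `h(2) = 43/108 > 0`, hence `h > 0` on `[0,2]`; consequently
`(Λ_{3,0}(R) − Λ_{3,2}(R))·(2/3) > Λ_{3,1}(R)` for `0 < R ≤ π/2`. -/
theorem stmt_15 (h : ℝ → ℝ)
    (hh : ∀ R, h R = 2 / 3 - 2 / 3 * R ^ 4 / (16 * 36) - R ^ 2 / 16) :
    0 < h (Real.pi / 2) ∧
    StrictAntiOn h (Set.Ici 0) ∧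
    h 2 = 43 / 108 ∧ (0 : ℝ) < 43 / 108 ∧
    (∀ R : ℝ, 0 ≤ R → R ≤ 2 → 0 < h R) ∧
    (∀ R : ℝ, 0 < R → R ≤ Real.pi / 2 →
      Lambda3 1 R < (Lambda3 0 R - Lambda3 2 R) * (2 / 3)) := by
  have hanti : StrictAntiOn h (Ici 0) := by
    intro a ha b _ hab
    have h2 := pow_lt_pow_left₀ hab ha two_ne_zero
    have h4 := pow_lt_pow_left₀ hab ha four_ne_zero
    rw [hh, hh]
    linarith
  have h2 : h 2 = 43 / 108 := by rw [hh]; norm_num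
  have hpos (R : ℝ) (hR0 : 0 ≤ R) (hR2 : R ≤ 2) : 0 < h R := by
    have := hanti.antitoneOn hR0 (show (2 : ℝ) ∈ Ici 0 by norm_num) hR2
    linarith
  refine ⟨hpos _ (by positivity) (by linarith [pi_le_four]), hanti, h2, by norm_num, hpos,
    fun R hR0 hR => ?_⟩
  have hC : 0 < (2 * π) ^ ((3 : ℝ) / 2) * (4 * π) := by positivity
  have := mul_lt_mul_of_pos_left (integral_besselHalfSq_one_add_two_lt hR0 hR) hC
  rw [Lambda3_eq 0 hR0.le, Lambda3_eq 1 hR0.le, Lambda3_eq 2 hR0.le]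
  linarith
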